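/- arXiv:2509.10792 — 3 statements merged into one kernel-verified Lean document; each statement's English description precedes it below -/
import Mathlib

section
/- Let d ≥ 0 and C > 0, and let f : ℝ → ℝ be a nonnegative nondecreasing function satisfying f(s) ≤ C(1 + s^(2d)) for all s ≥ 0. Then for every Ω > 1 and every δ > 0, the set of natural numbers m such that f(Ω^(m+1)) ≤ Ω^(2d+δ) · f(Ω^m) is infinite; equivalently, there exists a sequence of integers m_i → ∞ with f(Ω^(m_i+1)) ≤ Ω^(2d+δ) · f(Ω^(m_i)). -/
/-!
If `f (Ω ^ (m + 1)) > Ω ^ (2d + δ) f (Ω ^ m)` held for all large `m`, then `f (Ω ^ m)` would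
eventually be positive and grow at least like `(Ω ^ (2d + δ)) ^ m`, whereas the growth bound
caps it by a multiple of `(Ω ^ (2d)) ^ m`; the ratio `Ω ^ (δ m)` is unbounded.
-/

open Filter

theorem frequently_succ_le_mul_of_le_mul_pow {a : ℕ → ℝ} {A B K : ℝ} (ha : ∀ n, 0 ≤ a n)
    (hB : 0 < B) (hBA : B < A) (hgrowth : ∀ n, a n ≤ K * B ^ n) :
    ∃ᶠ m in atTop, a (m + 1) ≤ A * a m := by
  by_contra h
  obtain ⟨N, hN⟩ := eventually_atTop.mp (not_frequently.mp h)
  have hstep : ∀ m ≥ N, A * a m ≤ a (m + 1) := fun m hm => (not_le.mp (hN m hm)).le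
  have hpos : 0 < a (N + 1) :=
    (mul_nonneg (hB.trans hBA).le (ha N)).trans_lt (not_le.mp (hN N le_rfl))
  have hgeom (k : ℕ) : A ^ k * a (N + 1) ≤ a (N + 1 + k) :=
    geom_le (u := fun k => a (N + 1 + k)) (hB.trans hBA).le k fun j _ => hstep _ (by omega)
  obtain ⟨k, hk⟩ := pow_unbounded_of_one_lt (K * B ^ (N + 1) / a (N + 1)) ((one_lt_div hB).mpr hBA)
  rw [div_lt_iff₀ hpos, div_pow, div_mul_eq_mul_div, lt_div_iff₀ (pow_pos hB k)] at hk
  have hupper : A ^ k * a (N + 1) ≤ K * B ^ (N + 1) * B ^ k := by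
    simpa only [pow_add, mul_assoc] using (hgeom k).trans (hgrowth (N + 1 + k))
  linarith

theorem stmt_0_general (d C : ℝ) (hd : 0 ≤ d) (hC : 0 < C) (f : ℝ → ℝ)
    (hf_nonneg : ∀ s : ℝ, 0 ≤ f s)
    (hf_growth : ∀ s : ℝ, 0 ≤ s → f s ≤ C * (1 + s ^ (2 * d)))
    (Ω δ : ℝ) (hΩ : 1 < Ω) (hδ : 0 < δ) :
    {m : ℕ | f (Ω ^ (m + 1)) ≤ Ω ^ (2 * d + δ) * f (Ω ^ m)}.Infinite := by
  have hΩ0 : 0 ≤ Ω := by linarith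
  have hB : 1 ≤ Ω ^ (2 * d) := Real.one_le_rpow hΩ.le (by linarith)
  have hgrowth (m : ℕ) : f (Ω ^ m) ≤ 2 * C * (Ω ^ (2 * d)) ^ m := by
    have hpow : (Ω ^ m) ^ (2 * d) = (Ω ^ (2 * d)) ^ m := by
      rw [← Real.rpow_natCast_mul hΩ0, mul_comm, Real.rpow_mul_natCast hΩ0]
    have := hf_growth (Ω ^ m) (pow_nonneg hΩ0 m)
    nlinarith [one_le_pow₀ (n := m) hB]
  refine Nat.frequently_atTop_iff_infinite.mp
    (frequently_succ_le_mul_of_le_mul_pow (fun m => hf_nonneg _) (by linarith) ?_ hgrowth)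
  exact Real.rpow_lt_rpow_of_exponent_lt hΩ (by linarith)

/-- For a nonnegative nondecreasing `f : ℝ → ℝ` with
`f s ≤ C (1 + s ^ (2 d))` for all `s ≥ 0`, given `Ω > 1` and `δ > 0`, the set of
natural numbers `m` with `f (Ω ^ (m+1)) ≤ Ω ^ (2 d + δ) * f (Ω ^ m)` is infinite. -/
theorem stmt_0 (d C : ℝ) (hd : 0 ≤ d) (hC : 0 < C) (f : ℝ → ℝ)
    (hf_nonneg : ∀ s : ℝ, 0 ≤ f s) (hf_mono : Monotone f)
    (hf_growth : ∀ s : ℝ, 0 ≤ s → f s ≤ C * (1 + s ^ (2 * d)))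
    (Ω δ : ℝ) (hΩ : 1 < Ω) (hδ : 0 < δ) :
    {m : ℕ | f (Ω ^ (m + 1)) ≤ Ω ^ (2 * d + δ) * f (Ω ^ m)}.Infinite :=
  stmt_0_general d C hd hC f hf_nonneg hf_growth Ω δ hΩ hδ
end

section
/- Let d > 0, let α ∈ [1, 2], let q : ℕ → ℝ be strictly increasing with q_i ≥ 0 for all i, let c : ℕ → ℝ, and assume the series ∑_i c_i² · α^(2 q_i) converges. For 0 < s ≤ α define I(s) = ∑_i c_i² · s^(2 q_i). If I(α) ≤ 2^(2d), I(α/2) = 1, and I(α/4) ≤ 2^(−2d), then there is exactly one index i₀ with c_{i₀} ≠ 0, and this index satisfies q_{i₀} = d. In particular, if d is not in the range of q, no such coefficients c exist. -/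
/-!
Put `a i = c i ^ 2 * (α / 2) ^ (2 * q i)` and `x i = 2 ^ (2 * q i)`. The three hypotheses say
`∑ a i * x i ≤ D`, `∑ a i = 1` and `∑ a i / x i ≤ D⁻¹` with `D = 2 ^ (2 * d)`, so the nonnegative
series `∑ a i / x i * (x i - D) ^ 2 = ∑ a i * x i - 2 * D * ∑ a i + D ^ 2 * ∑ a i / x i` is `≤ 0`.
Hence every term vanishes: `x i = D`, i.e. `q i = d`, whenever `c i ≠ 0`, and since `q` is
injective and `∑ a i = 1`, exactly one such `i` exists.
-/

theorem eq_of_tsum_mul_le_of_tsum_div_le {ι : Type*} {a x : ι → ℝ} {D : ℝ}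
    (ha : ∀ i, 0 ≤ a i) (hx : ∀ i, 0 < x i) (hax : Summable fun i => a i * x i)
    (ha_sum : Summable a) (hadx : Summable fun i => a i / x i)
    (h_mul : ∑' i, a i * x i ≤ D) (h_one : ∑' i, a i = 1) (h_div : ∑' i, a i / x i ≤ D⁻¹)
    {i : ι} (hi : a i ≠ 0) : x i = D := by
  set g : ι → ℝ := fun j => a j / x j * (x j - D) ^ 2
  have hg_eq : ∀ j, g j = a j * x j - 2 * D * a j + D ^ 2 * (a j / x j) := fun j => by
    have := (hx j).ne'
    simp only [g]
    field_simp
    ring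
  have hg_nonneg : ∀ j, 0 ≤ g j := fun j => by have := ha j; have := hx j; positivity
  have hg_sum : Summable g :=
    ((hax.sub (ha_sum.mul_left _)).add (hadx.mul_left _)).congr fun j => (hg_eq j).symm
  have hg_tsum : ∑' j, g j ≤ 0 := calc
    ∑' j, g j = ∑' j, a j * x j - 2 * D * ∑' j, a j + D ^ 2 * ∑' j, a j / x j := by
      rw [tsum_congr hg_eq, (hax.sub (ha_sum.mul_left _)).tsum_add (hadx.mul_left _),
        hax.tsum_sub (ha_sum.mul_left _), tsum_mul_left, tsum_mul_left]
    _ ≤ D - 2 * D * 1 + D ^ 2 * D⁻¹ := by rw [h_one]; gcongr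
    _ = 0 := by rw [sq, mul_self_mul_inv]; ring
  have hgi : g i = 0 :=
    le_antisymm ((hg_sum.le_tsum i fun j _ => hg_nonneg j).trans hg_tsum) (hg_nonneg i)
  have hsq : (x i - D) ^ 2 = 0 :=
    (mul_eq_zero.1 hgi).resolve_left (div_ne_zero hi (hx i).ne')
  linarith [pow_eq_zero_iff (n := 2) two_ne_zero |>.1 hsq]

theorem stmt_4_general (d : ℝ) (α : ℝ) (hα1 : 1 ≤ α)
    (q : ℕ → ℝ) (hq : StrictMono q) (c : ℕ → ℝ)
    (hsum : Summable fun i => c i ^ 2 * α ^ (2 * q i))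
    (hIα : (∑' i, c i ^ 2 * α ^ (2 * q i)) ≤ 2 ^ (2 * d))
    (hI2 : (∑' i, c i ^ 2 * (α / 2) ^ (2 * q i)) = 1)
    (hI4 : (∑' i, c i ^ 2 * (α / 4) ^ (2 * q i)) ≤ 2 ^ (-(2 * d))) :
    ∃ i₀, c i₀ ≠ 0 ∧ q i₀ = d ∧ ∀ j, c j ≠ 0 → j = i₀ := by
  have hs : 0 < α / 2 := by linarith
  set a : ℕ → ℝ := fun i => c i ^ 2 * (α / 2) ^ (2 * q i)
  set x : ℕ → ℝ := fun i => (2 : ℝ) ^ (2 * q i)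
  have hα : ∀ i, c i ^ 2 * α ^ (2 * q i) = a i * x i := fun i => by
    rw [mul_assoc, ← Real.mul_rpow hs.le zero_le_two, div_mul_cancel₀ _ two_ne_zero]
  have hα4 : ∀ i, c i ^ 2 * (α / 4) ^ (2 * q i) = a i / x i := fun i => by
    rw [mul_div_assoc, ← Real.div_rpow hs.le zero_le_two, div_div]
    norm_num
  have ha : ∀ i, 0 ≤ a i := fun i => by positivity
  have hx : ∀ i, 0 < x i := fun i => by positivity
  have ha_sum : Summable a := not_imp_comm.1 tsum_eq_zero_of_not_summable (hI2 ▸ one_ne_zero)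
  have hadx : Summable fun i => a i / x i :=
    (ha_sum.div_const (x 0)).of_nonneg_of_le (fun i => div_nonneg (ha i) (hx i).le) fun i =>
      div_le_div_of_nonneg_left (ha i) (hx 0) <| Real.rpow_le_rpow_of_exponent_le one_le_two <| by
        linarith [hq.monotone (Nat.zero_le i)]
  have hqd : ∀ i, c i ≠ 0 → q i = d := fun i hi => by
    have hxi := eq_of_tsum_mul_le_of_tsum_div_le ha hx (hsum.congr hα) ha_sum hadx
      (tsum_congr hα ▸ hIα) hI2 (by rwa [← tsum_congr hα4, ← Real.rpow_neg zero_le_two])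
      (show a i ≠ 0 by positivity)
    linarith [(Real.rpow_right_inj two_pos one_lt_two.ne').1 hxi]
  obtain ⟨i₀, hi₀⟩ : ∃ i, c i ≠ 0 := by
    by_contra! h
    simp [a, h] at hI2
  exact ⟨i₀, hi₀, hqd i₀ hi₀, fun j hj => hq.injective ((hqd j hj).trans (hqd i₀ hi₀).symm)⟩

/-- Rigidity step in the three-circle theorem. If
`I s = ∑' i, c i ^ 2 * s ^ (2 * q i)` satisfies `I α ≤ 2 ^ (2 d)`, `I (α/2) = 1`
and `I (α/4) ≤ 2 ^ (-(2 d))` for some `α ∈ [1, 2]` and `d > 0`, then exactly one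
coefficient `c i₀` is nonzero and its exponent satisfies `q i₀ = d`. -/
theorem stmt_4 (d : ℝ) (hd : 0 < d) (α : ℝ) (hα1 : 1 ≤ α) (hα2 : α ≤ 2)
    (q : ℕ → ℝ) (hq : StrictMono q) (hq0 : ∀ i, 0 ≤ q i) (c : ℕ → ℝ)
    (hsum : Summable fun i => c i ^ 2 * α ^ (2 * q i))
    (hIα : (∑' i, c i ^ 2 * α ^ (2 * q i)) ≤ 2 ^ (2 * d))
    (hI2 : (∑' i, c i ^ 2 * (α / 2) ^ (2 * q i)) = 1)
    (hI4 : (∑' i, c i ^ 2 * (α / 4) ^ (2 * q i)) ≤ 2 ^ (-(2 * d))) :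
    ∃ i₀, c i₀ ≠ 0 ∧ q i₀ = d ∧ ∀ j, c j ≠ 0 → j = i₀ :=
  stmt_4_general d α hα1 q hq c hsum hIα hI2 hI4
end

section
/- For every d ≥ 0, δ > 0 and s₁ ≥ 1 there exists Ω₀ = Ω₀(d, δ, s₁) ≥ e such that the following holds for every Ω ≥ Ω₀. Let f : ℝ → ℝ be nonnegative and nondecreasing on [1, Ω] with f(1) = 1 and f(Ω) ≤ Ω^(2d), and suppose that for every s with s₁ ≤ s ≤ Ω/2 the implication holds: if f(s) > 2^(2d+δ) · f(s/2) then f(2s) > 2^(2d+δ) · f(s). Then f(s) ≤ 2^(2d+δ) · f(s/2) for every s with s₁ ≤ s ≤ log Ω. -/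
/-!
Suppose doubling fails at some scale `s ∈ [s₁, log Ω]`. By hypothesis the failure propagates
to `2s, 4s, …` as long as we stay below `Ω`, so with `q = 2 ^ (2d + δ)` and `2ᵏ s ≤ Ω < 2ᵏ⁺¹ s`
we get `q ^ k ≤ q ^ k f(s) ≤ f(2ᵏ s) ≤ f(Ω) ≤ Ω ^ (2d)`. But `2ᵏ > Ω / (2 log Ω)`, hence
`q ^ k = (2ᵏ) ^ (2d + δ) > (Ω / (2 log Ω)) ^ (2d + δ)`, and the extra power `Ω ^ δ` beats
`(2 log Ω) ^ (2d + δ)` once `Ω` is large.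
-/

open Filter Real

lemma eventually_rpow_le_div_mul_log_rpow {a b C : ℝ} (hab : a < b) (hC : 0 < C) :
    ∀ᶠ x : ℝ in atTop, x ^ a ≤ (x / (C * log x)) ^ b := by
  have hlog := (isLittleO_log_rpow_rpow_atTop b (sub_pos.2 hab)).def (rpow_pos_of_pos hC (-b))
  filter_upwards [hlog, eventually_gt_atTop 0, tendsto_log_atTop.eventually_gt_atTop 0]
    with x hx hx0 hlogx
  rw [norm_of_nonneg (rpow_nonneg hlogx.le b), norm_of_nonneg (rpow_nonneg hx0.le _)] at hx
  have hClog : (C * log x) ^ b ≤ x ^ (b - a) := by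
    calc (C * log x) ^ b = C ^ b * log x ^ b := mul_rpow hC.le hlogx.le
      _ ≤ C ^ b * (C ^ (-b) * x ^ (b - a)) := by gcongr
      _ = x ^ (b - a) := by rw [← mul_assoc, ← rpow_add hC, add_neg_cancel, rpow_zero, one_mul]
  have hCpos : 0 < (C * log x) ^ b := rpow_pos_of_pos (mul_pos hC hlogx) b
  rw [div_rpow hx0.le (mul_pos hC hlogx).le, le_div_iff₀ hCpos]
  calc x ^ a * (C * log x) ^ b ≤ x ^ a * x ^ (b - a) := by gcongr
    _ = x ^ b := by rw [← rpow_add hx0, add_sub_cancel]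

section Doubling

variable {f : ℝ → ℝ} {q s₁ Ω s : ℝ}

lemma doubling_fails_at_two_pow_mul
    (hprop : ∀ t, s₁ ≤ t → t ≤ Ω / 2 → q * f (t / 2) < f t → q * f t < f (2 * t))
    (hs₁ : s₁ ≤ s) (hs : 0 ≤ s) (hfail : q * f (s / 2) < f s) :
    ∀ k : ℕ, 2 ^ (k + 1) * s ≤ Ω → q * f (2 ^ k * s) < f (2 ^ (k + 1) * s)
  | 0, hk => by simpa using hprop s hs₁ (by norm_num at hk; linarith) hfail
  | k + 1, hk => by
    have hsk : s₁ ≤ 2 ^ (k + 1) * s :=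
      hs₁.trans (le_mul_of_one_le_left hs (one_le_pow₀ one_le_two))
    have hkΩ : 2 ^ (k + 1) * s ≤ Ω / 2 := by rw [pow_succ _ (k + 1)] at hk; linarith
    have hhalf : 2 ^ (k + 1) * s / 2 = 2 ^ k * s := by ring
    have hih := doubling_fails_at_two_pow_mul hprop hs₁ hs hfail k
      (by linarith [mul_nonneg (pow_nonneg zero_le_two (k + 1)) hs])
    rw [pow_succ _ (k + 1), mul_comm _ (2 : ℝ), mul_assoc]
    exact hprop _ hsk hkΩ (hhalf ▸ hih)

lemma pow_mul_le_of_doubling_fails (hq : 0 ≤ q)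
    (hprop : ∀ t, s₁ ≤ t → t ≤ Ω / 2 → q * f (t / 2) < f t → q * f t < f (2 * t))
    (hs₁ : s₁ ≤ s) (hs : 0 ≤ s) (hfail : q * f (s / 2) < f s) :
    ∀ k : ℕ, 2 ^ k * s ≤ Ω → q ^ k * f s ≤ f (2 ^ k * s)
  | 0, _ => by simp
  | k + 1, hk => by
    have hkΩ : 2 ^ k * s ≤ Ω :=
      (mul_le_mul_of_nonneg_right (pow_le_pow_right₀ one_le_two k.le_succ) hs).trans hk
    calc q ^ (k + 1) * f s = q * (q ^ k * f s) := by ring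
      _ ≤ q * f (2 ^ k * s) := by
        gcongr; exact pow_mul_le_of_doubling_fails hq hprop hs₁ hs hfail k hkΩ
      _ ≤ f (2 ^ (k + 1) * s) := (doubling_fails_at_two_pow_mul hprop hs₁ hs hfail k hk).le

end Doubling

/-- Real-analytic content of Corollary 4.4. For every `d ≥ 0`,
`δ > 0` and `s₁ ≥ 1` there is `Ω₀ ≥ e` such that for every `Ω ≥ Ω₀` and every
`f` nonnegative and nondecreasing on `[1, Ω]` with `f 1 = 1`, `f Ω ≤ Ω ^ (2 d)`,
and such that failure of doubling at a scale `s ∈ [s₁, Ω/2]` propagates to scale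
`2 s`, the doubling bound `f s ≤ 2 ^ (2 d + δ) * f (s / 2)` holds for all
`s ∈ [s₁, log Ω]`. -/
theorem stmt_6 (d δ s₁ : ℝ) (hd : 0 ≤ d) (hδ : 0 < δ) (hs₁ : 1 ≤ s₁) :
    ∃ Ω₀ : ℝ, Real.exp 1 ≤ Ω₀ ∧ ∀ Ω : ℝ, Ω₀ ≤ Ω →
      ∀ f : ℝ → ℝ,
        (∀ s : ℝ, 1 ≤ s → s ≤ Ω → 0 ≤ f s) →
        (∀ s t : ℝ, 1 ≤ s → s ≤ t → t ≤ Ω → f s ≤ f t) →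
        f 1 = 1 →
        f Ω ≤ Ω ^ (2 * d) →
        (∀ s : ℝ, s₁ ≤ s → s ≤ Ω / 2 →
          2 ^ (2 * d + δ) * f (s / 2) < f s → 2 ^ (2 * d + δ) * f s < f (2 * s)) →
        ∀ s : ℝ, s₁ ≤ s → s ≤ Real.log Ω → f s ≤ 2 ^ (2 * d + δ) * f (s / 2) := by
  obtain ⟨Ω₁, hΩ₁⟩ := eventually_atTop.1
    (eventually_rpow_le_div_mul_log_rpow (a := 2 * d) (b := 2 * d + δ) (by linarith) two_pos)
  refine ⟨max Ω₁ (exp 1), le_max_right _ _, fun Ω hΩ f _ hmono hf1 hfΩ hprop s hs₁s hsΩ => ?_⟩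
  by_contra! hfail
  have hΩpos : 0 < Ω := (exp_pos 1).trans_le ((le_max_right _ _).trans hΩ)
  have hlogΩ : 1 ≤ log Ω := (le_log_iff_exp_le hΩpos).2 ((le_max_right _ _).trans hΩ)
  have hs : 1 ≤ s := hs₁.trans hs₁s
  have hsΩ' : s ≤ Ω := by linarith [log_le_sub_one_of_pos hΩpos]
  obtain ⟨k, hk, hk'⟩ := exists_nat_pow_near ((one_le_div₀ (by linarith)).2 hsΩ') one_lt_two
  rw [le_div_iff₀ (by linarith)] at hk
  rw [div_lt_iff₀ (by linarith)] at hk'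
  have hkΩ : Ω / (2 * log Ω) < 2 ^ k := by
    rw [div_lt_iff₀ (by positivity)]
    calc Ω < 2 ^ (k + 1) * s := hk'
      _ ≤ 2 ^ (k + 1) * log Ω := by gcongr
      _ = 2 ^ k * (2 * log Ω) := by ring
  have hgrowth := pow_mul_le_of_doubling_fails (by positivity) hprop hs₁s (by linarith) hfail k hk
  refine lt_irrefl (Ω ^ (2 * d)) ?_
  calc Ω ^ (2 * d) ≤ (Ω / (2 * log Ω)) ^ (2 * d + δ) := hΩ₁ Ω ((le_max_left _ _).trans hΩ)
    _ < ((2 : ℝ) ^ k) ^ (2 * d + δ) := by gcongr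
    _ = (2 ^ (2 * d + δ)) ^ k := (rpow_pow_comm zero_le_two _ k).symm
    _ ≤ (2 ^ (2 * d + δ)) ^ k * f s :=
      le_mul_of_one_le_right (by positivity) (hf1 ▸ hmono 1 s le_rfl hs hsΩ')
    _ ≤ f (2 ^ k * s) := hgrowth
    _ ≤ f Ω := hmono _ _ (hs.trans (le_mul_of_one_le_left (by linarith) (one_le_pow₀ one_le_two)))
      hk le_rfl
    _ ≤ Ω ^ (2 * d) := hfΩ
end
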